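/- In the kernel setting with ux ∈ ℤⁿ, let k ∈ [n] be such that f(k−1) is well-defined, i.e., q := 1 − Σ_{j∈[n]∖[k−1]} U_j > 0. Then the supremum of (β + Σ_{j∈[n]∖[k−1]} U_j·α_j + Σ_{j∈[k−1]} C_j·ux_j)·v + (T_k·ux_k − α_k)·z over the set {(v,z) ∈ ℝ² : v ≥ 0, z ≥ 0, q·v + z = 1, U_k·v − z ≥ 0} is attained and equals max{f(k−1), f(k)}. -/

import Mathlib

/-!
The feasible region is the segment between the vertices `(1/q, 0)` and `(1/(q+U_k), U_k/(q+U_k))`,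
where the objective takes the values `f(k-1)` and `f(k)`; a linear objective on a segment is
maximised at an endpoint.
-/

open Finset

theorem isGreatest_linear_on_segment {q u : ℝ} (A D : ℝ) (hq : 0 < q) (hu : 0 < u) :
    IsGreatest {y : ℝ | ∃ v z : ℝ, 0 ≤ v ∧ 0 ≤ z ∧ q * v + z = 1 ∧ u * v - z ≥ 0 ∧
        y = A * v + D * z}
      (max (A / q) ((A + D * u) / (q + u))) := by
  have hqu : 0 < q + u := by linarith
  constructor
  · rcases le_total ((A + D * u) / (q + u)) (A / q) with h | h
    · refine ⟨1 / q, 0, by positivity, le_rfl, by simp [hq.ne'], by rw [sub_zero]; positivity, ?_⟩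
      rw [max_eq_left h]
      ring
    · refine ⟨1 / (q + u), u / (q + u), by positivity, by positivity, by field_simp, ?_, ?_⟩
      · rw [mul_one_div, sub_self]
      · rw [max_eq_right h]
        ring
  · rintro y ⟨v, z, hv, hz, hsum, hcut, rfl⟩
    set M := max (A / q) ((A + D * u) / (q + u))
    have h₁ : A ≤ M * q := (div_le_iff₀ hq).mp (le_max_left _ _)
    have h₂ : A + D * u ≤ M * (q + u) := (div_le_iff₀ hqu).mp (le_max_right _ _)
    -- `u (M - y)` is a nonnegative combination of the slacks of the two vertex values.
    have key : u * (M - (A * v + D * z)) =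
        z * (M * (q + u) - (A + D * u)) + (u * v - z) * (M * q - A) := by
      linear_combination (-(u * M)) * hsum
    have : 0 ≤ u * (M - (A * v + D * z)) := by
      rw [key]
      exact add_nonneg (mul_nonneg hz (by linarith)) (mul_nonneg hcut (by linarith))
    nlinarith

theorem sum_Icc_eq_add_sum_Icc_succ {M : Type*} [AddCommMonoid M] (g : ℕ → M) {k n : ℕ}
    (h : k ≤ n) : ∑ j ∈ Icc k n, g j = g k + ∑ j ∈ Icc (k + 1) n, g j := by
  rw [Icc_add_one_left_eq_Ioc, add_sum_Ioc_eq_sum_Icc h]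

theorem stmt_14_general (n : ℕ) (C T α ux : ℕ → ℤ) (β : ℤ)
    (hC : ∀ i ∈ Finset.Icc 1 n, 0 < C i)
    (hT : ∀ i ∈ Finset.Icc 1 n, 0 < T i)
    (f : ℕ → ℚ)
    (hf : ∀ m : ℕ, f m =
      ((β : ℚ) + ∑ j ∈ Finset.Icc (m + 1) n, (C j : ℚ) / (T j : ℚ) * (α j : ℚ) +
        ∑ j ∈ Finset.Icc 1 m, (C j : ℚ) * (ux j : ℚ)) /
      (1 - ∑ j ∈ Finset.Icc (m + 1) n, (C j : ℚ) / (T j : ℚ)))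
    (k : ℕ) (hk1 : 1 ≤ k) (hkn : k ≤ n)
    (q : ℚ) (hq : q = 1 - ∑ j ∈ Finset.Icc k n, (C j : ℚ) / (T j : ℚ))
    (hqpos : 0 < q) :
    IsGreatest {y : ℝ | ∃ v z : ℝ, 0 ≤ v ∧ 0 ≤ z ∧ (q : ℝ) * v + z = 1 ∧
        (C k : ℝ) / (T k : ℝ) * v - z ≥ 0 ∧
        y = ((β : ℝ) + ∑ j ∈ Finset.Icc k n, (C j : ℝ) / (T j : ℝ) * (α j : ℝ) +
              ∑ j ∈ Finset.Icc 1 (k - 1), (C j : ℝ) * (ux j : ℝ)) * v +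
            ((T k : ℝ) * (ux k : ℝ) - (α k : ℝ)) * z}
      ((max (f (k - 1)) (f k) : ℚ) : ℝ) := by
  obtain ⟨m, rfl⟩ := Nat.exists_eq_add_of_le' hk1
  have hk : m + 1 ∈ Icc 1 n := mem_Icc.mpr ⟨hk1, hkn⟩
  have hTk : (0 : ℝ) < T (m + 1) := by exact_mod_cast hT _ hk
  have hCk : (0 : ℝ) < C (m + 1) := by exact_mod_cast hC _ hk
  have hq' : (0 : ℝ) < q := by exact_mod_cast hqpos
  have h_prev : (f m : ℝ) =
      ((β : ℝ) + ∑ j ∈ Icc (m + 1) n, (C j : ℝ) / (T j : ℝ) * (α j : ℝ) +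
        ∑ j ∈ Icc 1 m, (C j : ℝ) * (ux j : ℝ)) / q := by
    rw [hf m, hq]
    push_cast
    rfl
  have h_next : (f (m + 1) : ℝ) =
      ((β : ℝ) + ∑ j ∈ Icc (m + 1) n, (C j : ℝ) / (T j : ℝ) * (α j : ℝ) +
        ∑ j ∈ Icc 1 m, (C j : ℝ) * (ux j : ℝ) +
        ((T (m + 1) : ℝ) * (ux (m + 1) : ℝ) - (α (m + 1) : ℝ)) * ((C (m + 1) : ℝ) / T (m + 1))) /
      (q + (C (m + 1) : ℝ) / T (m + 1)) := by
    rw [hf (m + 1), hq]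
    push_cast
    rw [sum_Icc_eq_add_sum_Icc_succ _ hkn, sum_Icc_eq_add_sum_Icc_succ _ hkn,
      sum_Icc_succ_top (by omega)]
    congr 1
    · field_simp
      ring
    · ring
  simpa only [Nat.add_sub_cancel, Rat.cast_max, h_prev, h_next] using
    isGreatest_linear_on_segment _ _ hq' (div_pos hCk hTk)

/-- Kernel setting with `q = 1 − Σ_{j∈[n]∖[k−1]} U_j > 0` (i.e. `f(k−1)` is
well-defined): the supremum of the knapsack subproblem LP for index `k` is
attained and equals `max (f(k−1)) (f(k))`. -/
theorem stmt_14 (n : ℕ) (C T α ux : ℕ → ℤ) (β : ℤ)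
    (hC : ∀ i ∈ Finset.Icc 1 n, 0 < C i)
    (hT : ∀ i ∈ Finset.Icc 1 n, 0 < T i)
    (hU : ∑ j ∈ Finset.Icc 1 n, (C j : ℚ) / (T j : ℚ) ≤ 1)
    (f : ℕ → ℚ)
    (hf : ∀ m : ℕ, f m =
      ((β : ℚ) + ∑ j ∈ Finset.Icc (m + 1) n, (C j : ℚ) / (T j : ℚ) * (α j : ℚ) +
        ∑ j ∈ Finset.Icc 1 m, (C j : ℚ) * (ux j : ℚ)) /
      (1 - ∑ j ∈ Finset.Icc (m + 1) n, (C j : ℚ) / (T j : ℚ)))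
    (k : ℕ) (hk1 : 1 ≤ k) (hkn : k ≤ n)
    (q : ℚ) (hq : q = 1 - ∑ j ∈ Finset.Icc k n, (C j : ℚ) / (T j : ℚ))
    (hqpos : 0 < q) :
    IsGreatest {y : ℝ | ∃ v z : ℝ, 0 ≤ v ∧ 0 ≤ z ∧ (q : ℝ) * v + z = 1 ∧
        (C k : ℝ) / (T k : ℝ) * v - z ≥ 0 ∧
        y = ((β : ℝ) + ∑ j ∈ Finset.Icc k n, (C j : ℝ) / (T j : ℝ) * (α j : ℝ) +
              ∑ j ∈ Finset.Icc 1 (k - 1), (C j : ℝ) * (ux j : ℝ)) * v +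
            ((T k : ℝ) * (ux k : ℝ) - (α k : ℝ)) * z}
      ((max (f (k - 1)) (f k) : ℚ) : ℝ) :=
  stmt_14_general n C T α ux β hC hT f hf k hk1 hkn q hq hqpos
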